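/- Let X be a complete CAT(0) space and γ an isometry of X. If σ ∈ X attains the translation length of γ, i.e. d(σ, γσ) = inf_{x∈X} d(x, γx), and γσ ≠ σ, then the midpoint σ' of the geodesic from σ to γσ also satisfies d(σ', γσ') = inf_{x∈X} d(x, γx), and the concatenation of the geodesic from σ to γσ with its γ-translate is a geodesic from σ to γ²σ. -/
import Mathlib


open Set Metric

/-- A geodesic segment parametrized proportionally to arc length on `[a,b]`. -/
def GeodesicSeg {X : Type*} [MetricSpace X] (γ : ℝ → X) (a b : ℝ) : Prop :=
  ∀ s ∈ Set.Icc a b, ∀ t ∈ Set.Icc a b,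
    (b - a) * dist (γ s) (γ t) = dist (γ a) (γ b) * |s - t|

/-- Every pair of points is joined by a geodesic segment. -/
def GeodesicSpace (X : Type*) [MetricSpace X] : Prop :=
  ∀ p q : X, ∃ γ : ℝ → X, γ 0 = p ∧ γ 1 = q ∧ GeodesicSeg γ 0 1

/-- The CAT(0) (NPC) midpoint comparison inequality. -/
def CAT0 (X : Type*) [MetricSpace X] : Prop :=
  ∀ x y z m : X, dist y m = dist y z / 2 → dist m z = dist y z / 2 →
    dist x m ^ 2 ≤ dist x y ^ 2 / 2 + dist x z ^ 2 / 2 - dist y z ^ 2 / 4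

/-- If `σ` attains the translation length of an isometry `γ` of a complete CAT(0) space and
`γσ ≠ σ`, then the midpoint `σ'` of the geodesic `[σ, γσ]` also attains it, and the
concatenation of `[σ,γσ]` with its `γ`-translate is a geodesic from `σ` to `γ²σ`. -/
theorem stmt4 {X : Type*} [MetricSpace X] [CompleteSpace X]
    (hgeo : GeodesicSpace X) (hnpc : CAT0 X)
    (γ : X ≃ᵢ X) (σ σ' : X)
    (hmin : dist σ (γ σ) = ⨅ x : X, dist x (γ x))
    (hne : γ σ ≠ σ)
    (hm1 : dist σ σ' = dist σ (γ σ) / 2)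
    (hm2 : dist σ' (γ σ) = dist σ (γ σ) / 2) :
    dist σ' (γ σ') = ⨅ x : X, dist x (γ x) ∧
    dist σ (γ (γ σ)) = 2 * dist σ (γ σ) := by
  have hbdd : BddBelow (Set.range fun x : X => dist x (γ x)) := by
    refine ⟨0, ?_⟩
    rintro y ⟨x, rfl⟩
    exact dist_nonneg
  have hiso : ∀ a b : X, dist (γ a) (γ b) = dist a b := fun a b => γ.dist_eq a b
  set L := dist σ (γ σ) with hL
  have hle : dist σ' (γ σ') ≤ L := by
    calc dist σ' (γ σ') ≤ dist σ' (γ σ) + dist (γ σ) (γ σ') := dist_triangle _ _ _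
      _ = L / 2 + dist σ σ' := by rw [hm2, hiso]
      _ = L := by rw [hm1]; ring
  have hge : L ≤ dist σ' (γ σ') := hmin ▸ ciInf_le hbdd σ'
  have heq : dist σ' (γ σ') = L := le_antisymm hle hge
  refine ⟨by rw [heq, hmin], ?_⟩
  have hub : dist σ (γ (γ σ)) ≤ 2 * L := by
    calc dist σ (γ (γ σ)) ≤ dist σ (γ σ) + dist (γ σ) (γ (γ σ)) := dist_triangle _ _ _
      _ = 2 * L := by rw [hiso]; ring
  have h1 : dist σ (γ σ') ^ 2 ≤
      dist σ (γ σ) ^ 2 / 2 + dist σ (γ (γ σ)) ^ 2 / 2 - dist (γ σ) (γ (γ σ)) ^ 2 / 4 := by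
    apply hnpc
    · rw [hiso, hiso]; exact hm1
    · rw [hiso, hiso]; exact hm2
  have h2 : dist (γ σ') σ' ^ 2 ≤
      dist (γ σ') σ ^ 2 / 2 + dist (γ σ') (γ σ) ^ 2 / 2 - dist σ (γ σ) ^ 2 / 4 :=
    hnpc _ _ _ _ hm1 hm2
  have h3 : dist (γ σ') σ' = L := by rw [dist_comm]; exact heq
  have h4 : dist (γ σ') (γ σ) = L / 2 := by rw [hiso, dist_comm]; exact hm1
  have h5 : dist (γ σ) (γ (γ σ)) = L := hiso σ (γ σ)
  have h6 : dist (γ σ') σ = dist σ (γ σ') := dist_comm _ _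
  have hLnn : (0:ℝ) ≤ L := dist_nonneg
  have hDnn : (0:ℝ) ≤ dist σ (γ (γ σ)) := dist_nonneg
  have hlb : 2 * L ≤ dist σ (γ (γ σ)) := by
    rw [h5] at h1
    rw [h3, h6, h4] at h2
    nlinarith [h1, h2, hLnn, hDnn, sq_nonneg (dist σ (γ σ') )]
  linarith
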